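/- Let A, B be n×n positive definite matrices, let X = A^{-1} # B, and let a, b ≥ 0. Then a²A + b²B + ab((AB)^{1/2} + (BA)^{1/2}) = (aI + bX) A (aI + bX). -/

import Mathlib

/-!
With `B = XAX` we have `AB = (AX)²` and `BA = (XA)²`. Writing `X = Rᴴ R`, the product `AX` is
similar to the positive definite matrix `R A Rᴴ`, so its spectrum is positive, and likewise for
`XA`. Hence they are the principal square roots, `S = AX` and `T = XA`, and the identity is the
expansion of `(a + bX) A (a + bX)`.

Square roots with spectrum in the open right half-plane are unique by Sylvester's theorem:
if `S² = R²` then `S - R` intertwines `S` and `-R`, whose spectra are disjoint.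
-/

open Matrix ComplexOrder

/-- The square root of a positive semidefinite matrix, as defined in Mathlib (Dec 2024);
removed from current Mathlib, restated here with its old definition. -/
noncomputable def _root_.Matrix.PosSemidef.sqrt {m : Type*} [Fintype m] [DecidableEq m]
    {𝕜 : Type*} [RCLike 𝕜] {A : Matrix m m 𝕜} (hA : A.PosSemidef) : Matrix m m 𝕜 :=
  hA.1.eigenvectorUnitary.1 * diagonal ((↑) ∘ (√·) ∘ hA.1.eigenvalues) *
  (star hA.1.eigenvectorUnitary : Matrix m m 𝕜)

lemma _root_.Matrix.PosSemidef.posSemidef_sqrt {m : Type*} [Fintype m] [DecidableEq m]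
    {𝕜 : Type*} [RCLike 𝕜] {A : Matrix m m 𝕜} (hA : A.PosSemidef) : hA.sqrt.PosSemidef := by
  apply PosSemidef.mul_mul_conjTranspose_same
  refine posSemidef_diagonal_iff.mpr fun i ↦ ?_
  rw [Function.comp_apply, RCLike.nonneg_iff]
  constructor
  · simp only [RCLike.ofReal_re]; exact Real.sqrt_nonneg _
  · simp only [RCLike.ofReal_im]

namespace Heron

variable {n : ℕ}

def WeakMaj {n : ℕ} (x y : Fin n → ℝ) : Prop :=
  ∀ s : Finset (Fin n), ∃ t : Finset (Fin n),
    t.card = s.card ∧ ∑ i ∈ s, x i ≤ ∑ i ∈ t, y i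

def Maj {n : ℕ} (x y : Fin n → ℝ) : Prop :=
  WeakMaj x y ∧ ∑ i, x i = ∑ i, y i

lemma sandwich_posSemidef {S T : Matrix (Fin n) (Fin n) ℂ} (hS : S.IsHermitian)
    (hT : T.PosSemidef) : (S * T * S).PosSemidef := by
  have h := hT.mul_mul_conjTranspose_same S
  rwa [hS.eq] at h

noncomputable def geomMean {A B : Matrix (Fin n) (Fin n) ℂ}
    (hA : A.PosDef) (hB : B.PosDef) : Matrix (Fin n) (Fin n) ℂ :=
  hA.posSemidef.sqrt *
    (sandwich_posSemidef hA.posSemidef.posSemidef_sqrt.isHermitian.inv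
        hB.posSemidef).sqrt *
    hA.posSemidef.sqrt

lemma geomMean_posSemidef {A B : Matrix (Fin n) (Fin n) ℂ}
    (hA : A.PosDef) (hB : B.PosDef) : (geomMean hA hB).PosSemidef :=
  sandwich_posSemidef hA.posSemidef.posSemidef_sqrt.isHermitian
    (Matrix.PosSemidef.posSemidef_sqrt _)

noncomputable def specMean {A B : Matrix (Fin n) (Fin n) ℂ}
    (hA : A.PosDef) (hB : B.PosDef) : Matrix (Fin n) (Fin n) ℂ :=
  (geomMean_posSemidef hA.inv hB).sqrt * A * (geomMean_posSemidef hA.inv hB).sqrt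

def HasPosSpectrum (M : Matrix (Fin n) (Fin n) ℂ) : Prop :=
  ∀ z ∈ spectrum ℂ M, 0 < z.re ∧ z.im = 0

def IsPrincipalSqrt (M S : Matrix (Fin n) (Fin n) ℂ) : Prop :=
  S * S = M ∧ HasPosSpectrum S

noncomputable def absMat (Y : Matrix (Fin n) (Fin n) ℂ) : Matrix (Fin n) (Fin n) ℂ :=
  (Matrix.posSemidef_conjTranspose_mul_self Y).sqrt

noncomputable def posPart (H : Matrix (Fin n) (Fin n) ℂ) : Matrix (Fin n) (Fin n) ℂ :=
  ((1 : ℂ) / 2) • (absMat H + H)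

end Heron

theorem Polynomial.aeval_mul_eq_mul_aeval {R A : Type*} [CommSemiring R] [Semiring A]
    [Algebra R A] {a b y : A} (h : a * y = y * b) (p : Polynomial R) :
    aeval a p * y = y * aeval b p := by
  have hpow (k : ℕ) : a ^ k * y = y * b ^ k := (SemiconjBy.pow_right h.symm k).symm
  induction p using Polynomial.induction_on' with
  | add p q hp hq => rw [map_add, map_add, add_mul, mul_add, hp, hq]
  | monomial k c =>
    rw [aeval_monomial, aeval_monomial, mul_assoc, hpow, ← mul_assoc, ← mul_assoc,
      Algebra.commutes]

/-- Sylvester: `Y * χ_M(N) = χ_M(M) * Y = 0`, and `χ_M(N)` is invertible by the spectral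
mapping theorem. -/
theorem Matrix.eq_zero_of_mul_eq_mul_of_disjoint_spectrum {ι K : Type*} [Fintype ι]
    [DecidableEq ι] [Field K] [IsAlgClosed K] {M N Y : Matrix ι ι K} (h : M * Y = Y * N)
    (hMN : Disjoint (spectrum K M) (spectrum K N)) : Y = 0 := by
  cases isEmpty_or_nonempty ι
  · exact Subsingleton.elim _ _
  have hY : Y * Polynomial.aeval N M.charpoly = 0 := by
    rw [← Polynomial.aeval_mul_eq_mul_aeval h, aeval_self_charpoly, zero_mul]
  have hunit : IsUnit (Polynomial.aeval N M.charpoly) := by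
    by_contra hnu
    have hdeg : 0 < M.charpoly.degree := by
      rw [charpoly_degree_eq_dim]; exact_mod_cast Fintype.card_pos
    rw [← spectrum.zero_mem_iff K, spectrum.map_polynomial_aeval_of_degree_pos _ _ hdeg] at hnu
    obtain ⟨μ, hμN, hμM⟩ := hnu
    exact Set.disjoint_left.mp hMN (mem_spectrum_iff_isRoot_charpoly.mpr hμM) hμN
  exact hunit.mul_left_eq_zero.mp hY

namespace Heron

variable {n : ℕ}

lemma _root_.Matrix.PosDef.hasPosSpectrum {M : Matrix (Fin n) (Fin n) ℂ} (hM : M.PosDef) :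
    HasPosSpectrum M := by
  rintro z hz
  rw [hM.isHermitian.spectrum_eq_image_range] at hz
  obtain ⟨_, ⟨i, rfl⟩, rfl⟩ := hz
  simpa using hM.eigenvalues_pos i

open scoped MatrixOrder in
lemma hasPosSpectrum_mul_of_posDef {A X : Matrix (Fin n) (Fin n) ℂ} (hA : A.PosDef)
    (hX : X.PosDef) : HasPosSpectrum (A * X) := by
  obtain ⟨R, rfl⟩ := CStarAlgebra.nonneg_iff_eq_star_mul_self.mp hX.posSemidef.nonneg
  lift R to (Matrix (Fin n) (Fin n) ℂ)ˣ using isUnit_of_mul_isUnit_right hX.isUnit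
  have hconj : A * (star R.val * R) = (R⁻¹).val * (R * A * star R.val) * R := by
    simp only [mul_assoc, Units.inv_mul_cancel_left]
  rw [hconj, HasPosSpectrum, spectrum.units_conjugate']
  exact ((R.isUnit.posDef_star_right_conjugate_iff).mpr hA).hasPosSpectrum

lemma IsPrincipalSqrt.eq {M S R : Matrix (Fin n) (Fin n) ℂ} (hS : IsPrincipalSqrt M S)
    (hR : IsPrincipalSqrt M R) : S = R := by
  have hintertwine : S * (S - R) = (S - R) * -R := by
    rw [mul_sub, sub_mul, mul_neg, mul_neg, hS.1, hR.1]; noncomm_ring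
  have hdisj : Disjoint (spectrum ℂ S) (spectrum ℂ (-R)) := by
    refine Set.disjoint_left.mpr fun z hzS hzR => ?_
    rw [← spectrum.neg_eq, Set.mem_neg] at hzR
    linarith [(hS.2 z hzS).1, (hR.2 (-z) hzR).1, Complex.neg_re z]
  exact sub_eq_zero.mp (eq_zero_of_mul_eq_mul_of_disjoint_spectrum hintertwine hdisj)

theorem wasserstein_riccati_form_general {n : ℕ} (A B X S T : Matrix (Fin n) (Fin n) ℂ)
    (hA : A.PosDef) (hX : X.PosDef) (hRic : X * A * X = B)
    (a b : ℝ)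
    (hS : IsPrincipalSqrt (A * B) S) (hT : IsPrincipalSqrt (B * A) T) :
    ((a : ℂ) ^ 2) • A + ((b : ℂ) ^ 2) • B + ((a : ℂ) * b) • (S + T)
      = ((a : ℂ) • 1 + (b : ℂ) • X) * A * ((a : ℂ) • 1 + (b : ℂ) • X) := by
  have hAX : IsPrincipalSqrt (A * B) (A * X) :=
    ⟨by rw [← hRic]; noncomm_ring, hasPosSpectrum_mul_of_posDef hA hX⟩
  have hXA : IsPrincipalSqrt (B * A) (X * A) :=
    ⟨by rw [← hRic]; noncomm_ring, hasPosSpectrum_mul_of_posDef hX hA⟩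
  rw [hS.eq hAX, hT.eq hXA, ← hRic]
  simp only [add_mul, mul_add, smul_mul_assoc, mul_smul_comm, one_mul, mul_one, smul_smul,
    smul_add, mul_assoc]
  module

/-- the Riccati form of the weighted Bures–Wasserstein expression:
`a²A + b²B + ab((AB)^{1/2} + (BA)^{1/2}) = (aI + bX) A (aI + bX)` where `X` is
the unique positive definite solution of `XAX = B`. -/
theorem wasserstein_riccati_form {n : ℕ} (A B X S T : Matrix (Fin n) (Fin n) ℂ)
    (hA : A.PosDef) (hB : B.PosDef) (hX : X.PosDef) (hRic : X * A * X = B)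
    (a b : ℝ) (ha : 0 ≤ a) (hb : 0 ≤ b)
    (hS : IsPrincipalSqrt (A * B) S) (hT : IsPrincipalSqrt (B * A) T) :
    ((a : ℂ) ^ 2) • A + ((b : ℂ) ^ 2) • B + ((a : ℂ) * b) • (S + T)
      = ((a : ℂ) • 1 + (b : ℂ) • X) * A * ((a : ℂ) • 1 + (b : ℂ) • X) :=
  wasserstein_riccati_form_general A B X S T hA hX hRic a b hS hT

end Heron
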